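/- For any nonnegative integer α, the operator identity (∏_{j=1}^r y_j)^{-α} ∘ (∏_{j=1}^r D_j) ∘ (∏_{j=1}^r y_j)^{1+α} = ∏_{j=1}^r (U_j + α) holds, as operators on polynomials in y₁,…,y_r. -/

import Mathlib

open MvPolynomial Finset

noncomputable section

abbrev Pol (r : ℕ) : Type := MvPolynomial (Fin r) ℂ

/-- Multiplication operator by a polynomial. -/
def mulOp {r : ℕ} (p : Pol r) : Module.End ℂ (Pol r) := LinearMap.mulLeft ℂ p

/-- Partial derivative operator. -/
def pd {r : ℕ} (j : Fin r) : Module.End ℂ (Pol r) := (pderiv j).toLinearMap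

/-- The transposition operator `s_{ij}` swapping the variables `i` and `j`. -/
def swOp {r : ℕ} (i j : Fin r) : Module.End ℂ (Pol r) :=
  (rename ⇑(Equiv.swap i j) : Pol r →ₐ[ℂ] Pol r).toLinearMap

/-- Ordered product `f 0 * f 1 * ⋯ * f (r-1)` of operators. -/
def opProd {r : ℕ} (f : Fin r → Module.End ℂ (Pol r)) : Module.End ℂ (Pol r) :=
  ((List.finRange r).map f).prod

/-- The type-A Dunkl operator `D_j = ∂_j + (a/2) ∑_{i ≠ j} q i j`, where `q i j` is the
difference-quotient operator `f ↦ (y_j - y_i)⁻¹ (1 - s_{ij}) f` (given as data, pinned down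
by the divisibility specification `DunklQuotA`). -/
def dunklA {r : ℕ} (a : ℂ) (q : Fin r → Fin r → Module.End ℂ (Pol r)) (j : Fin r) :
    Module.End ℂ (Pol r) :=
  pd j + (a / 2) • ∑ i ∈ Finset.univ.erase j, q i j

/-- Specification: `q i j` is division of `(1 - s_{ij}) f` by `y_j - y_i`. -/
def DunklQuotA {r : ℕ} (q : Fin r → Fin r → Module.End ℂ (Pol r)) : Prop :=
  ∀ i j : Fin r, i ≠ j → ∀ f : Pol r,
    (X j - X i) * q i j f = f - swOp i j f

/-- The type-A Cherednik operator `U_j = D_j y_j - (a/2) ∑_{i<j} s_{ij}`. -/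
def cherednikA {r : ℕ} (a : ℂ) (q : Fin r → Fin r → Module.End ℂ (Pol r)) (j : Fin r) :
    Module.End ℂ (Pol r) :=
  dunklA a q j * mulOp (X j) - (a / 2) • ∑ i ∈ Finset.univ.filter (fun i => i < j), swOp i j

/-! Write `P = y₁ ⋯ y_r` and `M_k = y₁ ⋯ y_k · P^α`, so that `M_0 = P^α` and `M_r = P^{α+1}`.
The identity telescopes from the one-step relation `D_j M_j = M_{j-1} (U_j + α)` (indices from
`1`). To see it, move `M_j = y_j M_{j-1}` through `D_j`: the derivative gives `(α + 1) M_{j-1}`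
since `y_j ∂_j P^α = α P^α`, and the difference quotient `q_{ij}` commutes with `M_j` when
`i < j` (then `s_{ij} M_j = M_j`), while for `i > j` it leaves the extra term `M_{j-1} s_{ij}`.
These are exactly the terms of `U_j + α = 1 + α + y_j D_j + (a/2) ∑_{i > j} s_{ij}`. -/

theorem List.prod_map_finRange_mul_eq_mul_prod_map {M : Type*} [Monoid M] {n : ℕ}
    (f g : Fin n → M) (t : ℕ → M) (h : ∀ j : Fin n, f j * t (j + 1) = t j * g j) :
    ((List.finRange n).map f).prod * t n = t 0 * ((List.finRange n).map g).prod := by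
  induction n generalizing t with
  | zero => simp
  | succ n ih =>
    have h_tail := ih (f ∘ Fin.succ) (g ∘ Fin.succ) (fun k => t (k + 1)) fun j => by
      simpa using h j.succ
    have h_head : f 0 * t 1 = t 0 * g 0 := by simpa using h 0
    simp only [List.finRange_succ, List.map_cons, List.map_map, List.prod_cons, mul_assoc,
      h_tail]
    rw [← mul_assoc, h_head, mul_assoc]

theorem Finset.sum_erase_eq_sum_lt_add_sum_gt {ι M : Type*} [Fintype ι] [LinearOrder ι]
    [AddCommMonoid M] (F : ι → M) (j : ι) :
    ∑ i ∈ univ.erase j, F i = ∑ i with i < j, F i + ∑ i with j < i, F i := by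
  rw [← sum_filter_add_sum_filter_not (univ.erase j) (· < j)]
  congr 2 <;> ext i
  · simpa using ne_of_lt
  · simpa [and_comm, eq_comm] using lt_iff_le_and_ne.symm

namespace DunklA

variable {r : ℕ}

theorem swOp_apply (i j : Fin r) (p : Pol r) : swOp i j p = rename (Equiv.swap i j) p := rfl

theorem swOp_prod_X {i j : Fin r} {s : Finset (Fin r)} (h : i ∈ s ↔ j ∈ s) :
    swOp i j (∏ m ∈ s, X m) = ∏ m ∈ s, X m := by
  rw [swOp_apply, map_prod]
  refine prod_equiv (Equiv.swap i j) (fun m => ?_) fun m _ => rename_X _ m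
  rcases eq_or_ne m i with rfl | hmi
  · simpa using h
  rcases eq_or_ne m j with rfl | hmj
  · simpa using h.symm
  · rw [Equiv.swap_apply_of_ne_of_ne hmi hmj]

theorem pderiv_prod_X_of_notMem {j : Fin r} {s : Finset (Fin r)} (hj : j ∉ s) :
    pderiv j (∏ m ∈ s, (X m : Pol r)) = 0 := by
  induction s using Finset.induction_on with
  | empty => simp
  | insert m s hm ih =>
    have hjm : j ≠ m := fun h => hj (h ▸ mem_insert_self m s)
    rw [prod_insert hm, pderiv_mul, pderiv_X_of_ne hjm.symm, ih fun h => hj (mem_insert_of_mem h)]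
    ring

theorem X_mul_pderiv_prod_X (j : Fin r) : X j * pderiv j (∏ m, X m : Pol r) = ∏ m, X m := by
  rw [← mul_prod_erase univ X (mem_univ j), pderiv_mul, pderiv_X_self,
    pderiv_prod_X_of_notMem (notMem_erase j univ)]
  ring

theorem X_mul_pderiv_pow {j : Fin r} {p : Pol r} {c : ℂ} (h : X j * pderiv j p = c • p) (n : ℕ) :
    X j * pderiv j (p ^ n) = (n * c) • p ^ n := by
  induction n with
  | zero => simp
  | succ n ih =>
    rw [pow_succ, pderiv_mul, mul_add, ← mul_assoc, ih, mul_left_comm, h]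
    push_cast
    rw [smul_mul_assoc, mul_smul_comm, ← add_smul]
    ring_nf

/-- `M_k = y₁ ⋯ y_k · P^α`, where the variable `y_m` is `X (m - 1)`. -/
def partialMonomial (α k : ℕ) : Pol r :=
  (∏ m ∈ univ.filter (fun m : Fin r => (m : ℕ) < k), X m) * (∏ m, X m) ^ α

theorem partialMonomial_zero (α : ℕ) : (partialMonomial α 0 : Pol r) = (∏ m, X m) ^ α := by
  simp [partialMonomial]

theorem partialMonomial_self (α : ℕ) : (partialMonomial α r : Pol r) = (∏ m, X m) ^ (α + 1) := by
  simp [partialMonomial, pow_succ']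

theorem partialMonomial_succ (α : ℕ) (j : Fin r) :
    partialMonomial α (j + 1) = X j * partialMonomial α j := by
  have h : univ.filter (fun m : Fin r => (m : ℕ) < j + 1)
      = insert j (univ.filter fun m : Fin r => (m : ℕ) < j) := by
    ext m
    simp [le_iff_eq_or_lt, Fin.val_inj]
  rw [partialMonomial, partialMonomial, h, prod_insert (by simp), mul_assoc]

theorem swOp_partialMonomial {i j : Fin r} {α k : ℕ} (h : (i : ℕ) < k ↔ (j : ℕ) < k) :
    swOp i j (partialMonomial α k) = partialMonomial α k := by
  rw [partialMonomial, swOp_apply, map_mul, map_pow, ← swOp_apply, ← swOp_apply,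
    swOp_prod_X (by simpa using h), swOp_prod_X (by simp)]

theorem pderiv_partialMonomial_succ (α : ℕ) (j : Fin r) :
    pderiv j (partialMonomial α (j + 1)) = ((α : ℂ) + 1) • partialMonomial α j := by
  have h_euler : X j * pderiv j (partialMonomial α j) = (α : ℂ) • partialMonomial α j := by
    rw [partialMonomial, pderiv_mul, pderiv_prod_X_of_notMem (by simp), zero_mul, zero_add,
      mul_left_comm, X_mul_pderiv_pow (c := 1) (by rw [X_mul_pderiv_prod_X, one_smul]),
      mul_one, mul_smul_comm]
  rw [partialMonomial_succ, pderiv_mul, pderiv_X_self, h_euler, add_smul, one_smul, one_mul,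
    add_comm]

section

variable {q : Fin r → Fin r → Module.End ℂ (Pol r)}

theorem _root_.DunklQuotA.apply_mul (hq : DunklQuotA q) {i j : Fin r} (hij : i ≠ j) {g h : Pol r}
    (hg : g - swOp i j g = (X j - X i) * h) (f : Pol r) :
    q i j (g * f) = g * q i j f + h * swOp i j f := by
  have hX : (X j - X i : Pol r) ≠ 0 := sub_ne_zero.2 fun he => hij (X_injective he).symm
  refine mul_left_cancel₀ hX ?_
  rw [hq i j hij, swOp_apply, map_mul, ← swOp_apply, ← swOp_apply]
  linear_combination (-g) * hq i j hij f + swOp i j f * hg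

theorem dunklA_X_self_mul (hq : DunklQuotA q) (a : ℂ) (j : Fin r) (f : Pol r) :
    dunklA a q j (X j * f)
      = f + X j * dunklA a q j f + (a / 2) • ∑ i ∈ univ.erase j, swOp i j f := by
  have hquot : ∀ i ∈ univ.erase j, q i j (X j * f) = X j * q i j f + swOp i j f := by
    intro i hi
    have hX : (X j : Pol r) - swOp i j (X j) = (X j - X i) * 1 := by
      rw [swOp_apply, rename_X, Equiv.swap_apply_right, mul_one]
    rw [hq.apply_mul (ne_of_mem_erase hi) hX, one_mul]
  simp only [dunklA, pd, LinearMap.add_apply, LinearMap.smul_apply, LinearMap.sum_apply,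
    Derivation.coeFn_coe, pderiv_mul, pderiv_X_self, sum_congr rfl hquot, sum_add_distrib,
    ← mul_sum, smul_add, mul_add, mul_smul_comm]
  ring

theorem cherednikA_add_apply (hq : DunklQuotA q) (a c : ℂ) (j : Fin r) (f : Pol r) :
    (cherednikA a q j + c • 1) f
      = (c + 1) • f + X j * dunklA a q j f + (a / 2) • ∑ i with j < i, swOp i j f := by
  simp only [cherednikA, LinearMap.add_apply, LinearMap.sub_apply, Module.End.mul_apply,
    mulOp, LinearMap.mulLeft_apply, dunklA_X_self_mul hq, sum_erase_eq_sum_lt_add_sum_gt,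
    LinearMap.smul_apply, LinearMap.sum_apply, Module.End.one_apply]
  simp only [smul_eq_C_mul, C_add, C_1]
  ring

theorem dunklA_partialMonomial_mul (hq : DunklQuotA q) (a : ℂ) (α : ℕ) (j : Fin r) (f : Pol r) :
    dunklA a q j (partialMonomial α (j + 1) * f)
      = partialMonomial α (j + 1) * dunklA a q j f + ((α : ℂ) + 1) • (partialMonomial α j * f)
        + (a / 2) • (partialMonomial α j * ∑ i with j < i, swOp i j f) := by
  have h_lt : ∀ i, i < j → q i j (partialMonomial α (j + 1) * f)
      = partialMonomial α (j + 1) * q i j f := fun i hij => by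
    simpa using hq.apply_mul hij.ne (h := 0)
      (by rw [swOp_partialMonomial (by omega), sub_self, mul_zero]) f
  have h_gt : ∀ i, j < i → q i j (partialMonomial α (j + 1) * f)
      = partialMonomial α (j + 1) * q i j f + partialMonomial α j * swOp i j f := fun i hij =>
    hq.apply_mul hij.ne' (by
      rw [partialMonomial_succ, swOp_apply, map_mul, rename_X, Equiv.swap_apply_right,
        ← swOp_apply, swOp_partialMonomial (by omega)]
      ring) f
  simp only [dunklA, pd, LinearMap.add_apply, LinearMap.smul_apply, LinearMap.sum_apply,
    Derivation.coeFn_coe, pderiv_mul, pderiv_partialMonomial_succ, sum_erase_eq_sum_lt_add_sum_gt]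
  rw [sum_congr rfl fun i hi => h_lt i (mem_filter.1 hi).2,
    sum_congr rfl fun i hi => h_gt i (mem_filter.1 hi).2]
  simp only [sum_add_distrib, ← mul_sum, smul_eq_C_mul, C_add, C_1]
  ring

theorem dunklA_mul_mulOp_partialMonomial (hq : DunklQuotA q) (a : ℂ) (α : ℕ) (j : Fin r) :
    dunklA a q j * mulOp (partialMonomial α (j + 1))
      = mulOp (partialMonomial α j) * (cherednikA a q j + (α : ℂ) • 1) := by
  refine LinearMap.ext fun f => ?_
  simp only [Module.End.mul_apply, mulOp, LinearMap.mulLeft_apply]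
  rw [dunklA_partialMonomial_mul hq, cherednikA_add_apply hq, partialMonomial_succ]
  simp only [smul_eq_C_mul, C_add, C_1]
  ring

end

end DunklA

/-- The conjugation `(∏ yⱼ)^{-α} (∏ Dⱼ) (∏ yⱼ)^{1+α}` is expressed without inverting the
(injective) multiplication operator. -/
theorem dunklA_prod_conj {r : ℕ} (a : ℂ)
    (q : Fin r → Fin r → Module.End ℂ (Pol r)) (hq : DunklQuotA q) (α : ℕ) :
    opProd (dunklA a q) * mulOp ((∏ j : Fin r, X j) ^ (α + 1))
      = mulOp ((∏ j : Fin r, X j) ^ α) *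
        opProd (fun j => cherednikA a q j + (α : ℂ) • 1) := by
  rw [← DunklA.partialMonomial_self, ← DunklA.partialMonomial_zero]
  exact List.prod_map_finRange_mul_eq_mul_prod_map _ _
    (fun k => mulOp (DunklA.partialMonomial α k)) (DunklA.dunklA_mul_mulOp_partialMonomial hq a α)
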